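/- Let 𝒲 be a finite type, d ≥ 1, P a probability mass function on 𝒲×𝒲 for classical registers (W_A, W'), (ρ^{w_a,w'}) a family of d×d density matrices (the quantum register Y'), and ε ≥ 0. Assume p := Σ_{(w_a,w') : w_a ≠ w'} P(w_a,w') > 0 and that the state conditioned on the event {W_A ≠ W'} is ε-close to Markov: δ(ρ_{W_A W' Y' | W_A ≠ W'}, ρ_{W_A ↔ W' ↔ Y' | W_A ≠ W'}) ≤ ε, where the conditioned cq-state is given by the pmf P_{≠}(w_a,w') := P(w_a,w')·[w_a ≠ w']/p with the same quantum states, and the conditioned Markov state is its Markov state conditioning on the W' coordinate. Define the extended cq-state ρ_{W_A W' Y Y'} over 𝒲×𝒲×{0,1} by adjoining the deterministic register Y := [W_A = W'] (pmf P'(w_a,w',y) := P(w_a,w')·[y = [w_a = w']], quantum states ρ^{w_a,w'}). Then δ(ρ_{W_A W' Y Y'}, ρ_{W_A ↔ (W',Y) ↔ Y'}) ≤ ε, where the Markov state conditions on the (W',Y) coordinates. -/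

import Mathlib

open Matrix Kronecker
open scoped ComplexOrder

/-- Trace distance of two (Hermitian) matrices: half the sum of the absolute
values of the eigenvalues of their difference. -/
noncomputable def traceDist {n : Type*} [Fintype n] [DecidableEq n]
    (A B : Matrix n n ℂ) : ℝ :=
  if h : (A - B).IsHermitian then (1 / 2) * ∑ i, |h.eigenvalues i| else 0

/-- A probability mass function on a finite type. -/
def IsPMF {𝒯 : Type*} [Fintype 𝒯] (P : 𝒯 → ℝ) : Prop :=
  (∀ t, 0 ≤ P t) ∧ ∑ t, P t = 1

/-- A density matrix: positive semidefinite (hence Hermitian) with trace 1. -/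
def IsDensity {d : ℕ} (ρ : Matrix (Fin d) (Fin d) ℂ) : Prop :=
  ρ.PosSemidef ∧ ρ.trace = 1

/-- The block-diagonal density matrix of a cq-state:  ρ = Σ_t P(t)·(E_{t,t} ⊗ ρ^t). -/
noncomputable def cqState {𝒯 : Type*} [Fintype 𝒯] [DecidableEq 𝒯] {d : ℕ}
    (P : 𝒯 → ℝ) (ρ : 𝒯 → Matrix (Fin d) (Fin d) ℂ) :
    Matrix (𝒯 × Fin d) (𝒯 × Fin d) ℂ :=
  ∑ t, (P t : ℂ) • (single t t 1 ⊗ₖ ρ t)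

/-!
The difference of two cq-states with the same classical distribution `P` is block diagonal, so
its trace norm is the `P`-weighted sum of the trace norms of the blocks:
`δ(ρ_P, σ_P) = ∑ₜ P(t) δ(ρᵗ, σᵗ)`. In the extended state, the blocks with `Y = true` have
`W_A = W'`, so `W_A` is determined by `(W', Y)` and these blocks agree with their conditional
average. The blocks with `Y = false` are those of the state conditioned on `W_A ≠ W'`, scaled by
`p`, and conditioning on `(W', false)` is conditioning on `W'`. Hence the distance to the Markov
state is `p ≤ 1` times the conditioned one.
-/

open Polynomial

namespace Matrix

variable {n o : Type*} [Fintype n] [DecidableEq n] [Fintype o] [DecidableEq o]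

theorem charmatrix_blockDiagonal {R : Type*} [CommRing R] (M : o → Matrix n n R) :
    charmatrix (blockDiagonal M) = blockDiagonal fun k => charmatrix (M k) := by
  ext ⟨i, k⟩ ⟨j, k'⟩
  simp only [charmatrix_apply, blockDiagonal_apply', diagonal_apply, Prod.mk.injEq]
  split_ifs <;> simp_all

theorem charpoly_blockDiagonal {R : Type*} [CommRing R] (M : o → Matrix n n R) :
    (blockDiagonal M).charpoly = ∏ k, (M k).charpoly := by
  rw [charpoly, charmatrix_blockDiagonal, det_blockDiagonal]
  rfl

/-- On Hermitian matrices this is the trace norm `∑ i, |λᵢ|` (`IsHermitian.sum_abs_eigenvalues`).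
Reading it off the characteristic polynomial makes it independent of how the eigenvalues are
enumerated, hence invariant under reindexing. -/
noncomputable def traceNorm (A : Matrix n n ℂ) : ℝ :=
  (A.charpoly.roots.map fun z => |z.re|).sum

theorem traceNorm_eq_of_charpoly_eq_prod {v : n → ℂ} {A : Matrix n n ℂ}
    (hA : A.charpoly = ∏ i, (X - C (v i))) : traceNorm A = ∑ i, |(v i).re| := by
  rw [traceNorm, hA, roots_prod _ _ (Finset.prod_ne_zero_iff.2 fun i _ => X_sub_C_ne_zero _)]
  simp only [roots_X_sub_C, Multiset.map_bind, Multiset.sum_bind, Multiset.map_singleton,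
    Multiset.sum_singleton]
  rfl

theorem IsHermitian.sum_abs_eigenvalues {A : Matrix n n ℂ} (hA : A.IsHermitian) :
    ∑ i, |hA.eigenvalues i| = traceNorm A := by
  simp [traceNorm_eq_of_charpoly_eq_prod hA.charpoly_eq]

theorem IsHermitian.traceNorm_real_smul {A : Matrix n n ℂ} (hA : A.IsHermitian) (c : ℝ) :
    traceNorm ((c : ℂ) • A) = |c| * traceNorm A := by
  have hcA : ((c : ℂ) • A).charpoly = ∏ i, (X - C ((c * hA.eigenvalues i : ℝ) : ℂ)) := by
    conv_lhs => rw [hA.spectral_theorem, ← map_smul, Unitary.conjStarAlgAut_apply,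
      charpoly_mul_comm, ← mul_assoc]
    simp [← diagonal_smul, charpoly_diagonal]
  rw [traceNorm_eq_of_charpoly_eq_prod hcA, traceNorm_eq_of_charpoly_eq_prod hA.charpoly_eq,
    Finset.mul_sum]
  simp [abs_mul]

theorem traceNorm_reindex {m : Type*} [Fintype m] [DecidableEq m] (e : n ≃ m)
    (A : Matrix n n ℂ) : traceNorm (reindex e e A) = traceNorm A := by
  rw [traceNorm, charpoly_reindex, traceNorm]

theorem traceNorm_blockDiagonal (M : o → Matrix n n ℂ) :
    traceNorm (blockDiagonal M) = ∑ k, traceNorm (M k) := by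
  rw [traceNorm, charpoly_blockDiagonal,
    roots_prod _ _ (monic_prod_of_monic _ _ fun k _ => charpoly_monic _).ne_zero]
  simp only [Multiset.map_bind, Multiset.sum_bind]
  rfl

theorem traceNorm_zero : traceNorm (0 : Matrix n n ℂ) = 0 := by
  simp [traceNorm, Multiset.map_nsmul, Multiset.sum_nsmul]

end Matrix

section TraceDistance

variable {n : Type*} [Fintype n] [DecidableEq n]

theorem traceDist_eq_traceNorm {A B : Matrix n n ℂ} (h : (A - B).IsHermitian) :
    traceDist A B = traceNorm (A - B) / 2 := by
  rw [traceDist, dif_pos h, h.sum_abs_eigenvalues]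
  ring

theorem traceDist_nonneg (A B : Matrix n n ℂ) : 0 ≤ traceDist A B := by
  rw [traceDist]
  split_ifs
  · positivity
  · rfl

theorem traceDist_self (A : Matrix n n ℂ) : traceDist A A = 0 := by
  rw [traceDist_eq_traceNorm (by simp), sub_self, traceNorm_zero, zero_div]

end TraceDistance

section CqState

variable {𝒯 : Type*} [Fintype 𝒯] [DecidableEq 𝒯] {d : ℕ}

theorem cqState_eq_reindex_blockDiagonal (P : 𝒯 → ℝ) (ρ : 𝒯 → Matrix (Fin d) (Fin d) ℂ) :
    cqState P ρ = reindex (Equiv.prodComm _ _) (Equiv.prodComm _ _)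
      (blockDiagonal fun t => (P t : ℂ) • ρ t) := by
  ext ⟨t, i⟩ ⟨s, j⟩
  simp [cqState, Matrix.sum_apply, blockDiagonal_apply', single_apply, ite_and]

theorem traceDist_cqState (P : 𝒯 → ℝ) (ρ σ : 𝒯 → Matrix (Fin d) (Fin d) ℂ)
    (h : ∀ t, (ρ t - σ t).IsHermitian) :
    traceDist (cqState P ρ) (cqState P σ) = ∑ t, |P t| * traceDist (ρ t) (σ t) := by
  have hblock : cqState P ρ - cqState P σ = reindex (Equiv.prodComm _ _) (Equiv.prodComm _ _)
      (blockDiagonal fun t => (P t : ℂ) • (ρ t - σ t)) := by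
    ext ⟨t, i⟩ ⟨s, j⟩
    simp [cqState_eq_reindex_blockDiagonal, blockDiagonal_apply', mul_sub, apply_ite₂]
  have hsmul : ∀ t, ((P t : ℂ) • (ρ t - σ t)).IsHermitian := fun t =>
    (h t).smul (Complex.conj_ofReal _)
  have hH : (cqState P ρ - cqState P σ).IsHermitian :=
    hblock ▸ (isHermitian_blockDiagonal_iff.2 hsmul).submatrix _
  rw [traceDist_eq_traceNorm hH, hblock, traceNorm_reindex, traceNorm_blockDiagonal,
    Finset.sum_div]
  refine Finset.sum_congr rfl fun t _ => ?_
  rw [(h t).traceNorm_real_smul, traceDist_eq_traceNorm (h t)]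
  ring

end CqState

section ConditionalAverage

variable {ι n : Type*} [Fintype ι]

noncomputable def condAvg (q : ι → ℝ) (ρ : ι → Matrix n n ℂ) : Matrix n n ℂ :=
  if 0 < ∑ i, q i then ((∑ i, q i : ℝ) : ℂ)⁻¹ • ∑ i, (q i : ℂ) • ρ i else 0

theorem condAvg_const_mul {c : ℝ} (hc : 0 < c) (q : ι → ℝ) (ρ : ι → Matrix n n ℂ) :
    condAvg (fun i => c * q i) ρ = condAvg q ρ := by
  simp only [condAvg, ← Finset.mul_sum, mul_pos_iff_of_pos_left hc]
  split_ifs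
  · have hc' : (c : ℂ) ≠ 0 := Complex.ofReal_ne_zero.2 hc.ne'
    simp only [Complex.ofReal_mul, mul_smul, ← Finset.smul_sum]
    rw [smul_smul, _root_.mul_inv_rev, inv_mul_cancel_right₀ hc']
  · rfl

theorem condAvg_of_eq_zero_of_ne {q : ι → ℝ} {i₀ : ι} (hq : ∀ i, i ≠ i₀ → q i = 0)
    (hq₀ : 0 < q i₀) (ρ : ι → Matrix n n ℂ) : condAvg q ρ = ρ i₀ := by
  classical
  have hsum : ∑ i, q i = q i₀ := Fintype.sum_eq_single i₀ hq
  have hsmul : ∑ i, (q i : ℂ) • ρ i = (q i₀ : ℂ) • ρ i₀ :=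
    Fintype.sum_eq_single i₀ fun i hi => by simp [hq i hi]
  rw [condAvg, if_pos (hsum ▸ hq₀), hsum, hsmul, smul_smul,
    inv_mul_cancel₀ (Complex.ofReal_ne_zero.2 hq₀.ne'), one_smul]

theorem abs_mul_traceDist_condAvg_of_eq_zero_of_ne [Fintype n] [DecidableEq n]
    (ρ : ι → Matrix n n ℂ) {q : ι → ℝ} {i₀ : ι} (hq : ∀ i, i ≠ i₀ → q i = 0) (hq₀ : 0 ≤ q i₀) :
    |q i₀| * traceDist (ρ i₀) (condAvg q ρ) = 0 := by
  rcases hq₀.eq_or_lt with h0 | hpos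
  · rw [← h0, abs_zero, zero_mul]
  · rw [condAvg_of_eq_zero_of_ne hq hpos, traceDist_self, mul_zero]

theorem isHermitian_condAvg (q : ι → ℝ) {ρ : ι → Matrix n n ℂ} (hρ : ∀ i, (ρ i).IsHermitian) :
    (condAvg q ρ).IsHermitian := by
  unfold condAvg
  split_ifs
  · exact IsHermitian.smul (isSelfAdjoint_sum _ fun i _ => (hρ i).smul (Complex.conj_ofReal _))
      (by simp [IsSelfAdjoint, Complex.conj_ofReal])
  · exact isHermitian_zero

end ConditionalAverage

theorem stmt12_general {𝒲 : Type*} [Fintype 𝒲] [DecidableEq 𝒲] {d : ℕ}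
    -- classical registers (W_A, W'), quantum register Y'
    (P : 𝒲 × 𝒲 → ℝ) (hP : IsPMF P)
    (ρ : 𝒲 × 𝒲 → Matrix (Fin d) (Fin d) ℂ) (hρ : ∀ t, IsDensity (ρ t))
    (ε : ℝ)
    (p : ℝ) (hp : p = ∑ t : 𝒲 × 𝒲, if t.1 = t.2 then 0 else P t) (hp0 : 0 < p)
    -- the pmf conditioned on the event {W_A ≠ W'}
    (Pne : 𝒲 × 𝒲 → ℝ)
    (hPne : ∀ wa w', Pne (wa, w') = if wa = w' then 0 else P (wa, w') / p)
    -- its conditional averages given W'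
    (σne : 𝒲 → Matrix (Fin d) (Fin d) ℂ)
    (hσne : ∀ w', σne w' =
      if 0 < ∑ wa, Pne (wa, w')
      then ((∑ wa, Pne (wa, w') : ℝ) : ℂ)⁻¹ • ∑ wa, (Pne (wa, w') : ℂ) • ρ (wa, w')
      else 0)
    -- hypothesis: δ(ρ_{W_A W' Y' | W_A ≠ W'}, ρ_{W_A↔W'↔Y' | W_A ≠ W'}) ≤ ε
    (h : traceDist (cqState Pne ρ) (cqState Pne (fun t => σne t.2)) ≤ ε)
    -- the extended cq-state over (W_A, W', Y) with Y = [W_A = W']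
    (P' : 𝒲 × 𝒲 × Bool → ℝ)
    (hP' : ∀ wa w' y, P' (wa, w', y) = if y = decide (wa = w') then P (wa, w') else 0)
    -- its conditional averages given (W', Y)
    (σ' : 𝒲 × Bool → Matrix (Fin d) (Fin d) ℂ)
    (hσ' : ∀ w' y, σ' (w', y) =
      if 0 < ∑ wa, P' (wa, w', y)
      then ((∑ wa, P' (wa, w', y) : ℝ) : ℂ)⁻¹ • ∑ wa, (P' (wa, w', y) : ℂ) • ρ (wa, w')
      else 0) :
    -- conclusion: δ(ρ_{W_A W' Y Y'}, ρ_{W_A↔(W',Y)↔Y'}) ≤ ε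
    traceDist (cqState P' (fun t => ρ (t.1, t.2.1)))
        (cqState P' (fun t => σ' t.2)) ≤ ε := by
  obtain ⟨hP_nonneg, hP_sum⟩ := hP
  have hσne_eq : ∀ w', σne w' = condAvg (fun wa => Pne (wa, w')) (fun wa => ρ (wa, w')) := hσne
  have hσ'_eq : ∀ w' y, σ' (w', y) = condAvg (fun wa => P' (wa, w', y)) (fun wa => ρ (wa, w')) :=
    hσ'
  have hP'_false : ∀ wa w', P' (wa, w', false) = p * Pne (wa, w') := fun wa w' => by
    by_cases hw : wa = w' <;> simp [hP', hPne, hw, mul_div_cancel₀ _ hp0.ne']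
  have hσ'_false : ∀ w', σ' (w', false) = σne w' := fun w' => by
    simp only [hσ'_eq, hσne_eq, hP'_false, condAvg_const_mul hp0]
  have h_true : ∀ wa w', |P' (wa, w', true)| * traceDist (ρ (wa, w')) (σ' (w', true)) = 0 := by
    intro wa w'
    rcases eq_or_ne wa w' with rfl | hw
    · rw [hσ'_eq]
      exact abs_mul_traceDist_condAvg_of_eq_zero_of_ne (fun wb => ρ (wb, wa))
        (q := fun wb => P' (wb, wa, true)) (fun wb hw => by simp [hP', hw])
        (by simp [hP', hP_nonneg])
    · simp [hP', hw]
  have hp_le : p ≤ 1 := by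
    rw [hp, ← hP_sum]
    exact Finset.sum_le_sum fun t _ => by split_ifs <;> [exact hP_nonneg t; rfl]
  have hρH : ∀ t, (ρ t).IsHermitian := fun t => (hρ t).1.1
  have hσneH : ∀ w', (σne w').IsHermitian := fun w' =>
    (hσne_eq w').symm ▸ isHermitian_condAvg _ fun _ => hρH _
  have hσ'H : ∀ s, (σ' s).IsHermitian := fun ⟨w', y⟩ =>
    (hσ'_eq w' y).symm ▸ isHermitian_condAvg _ fun _ => hρH _
  rw [traceDist_cqState _ _ _ fun t => (hρH t).sub (hσneH t.2)] at h
  rw [traceDist_cqState P' (fun t => ρ (t.1, t.2.1)) _ fun t => (hρH _).sub (hσ'H t.2)]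
  calc ∑ t, |P' t| * traceDist (ρ (t.1, t.2.1)) (σ' t.2)
      = p * ∑ t, |Pne t| * traceDist (ρ t) (σne t.2) := by
        simp only [Fintype.sum_prod_type, Fintype.sum_bool, h_true, hP'_false, hσ'_false,
          abs_mul, abs_of_pos hp0, zero_add, Finset.mul_sum, mul_assoc]
    _ ≤ 1 * ∑ t, |Pne t| * traceDist (ρ t) (σne t.2) :=
        mul_le_mul_of_nonneg_right hp_le
          (Finset.sum_nonneg fun t _ => mul_nonneg (abs_nonneg _) (traceDist_nonneg _ _))
    _ ≤ ε := (one_mul _).trans_le h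

/-- Identification, security for Alice: if the state conditioned on the event
{W_A ≠ W'} is ε-close to Markov (conditioning on W'), then the state extended by
the bit Y = [W_A = W'] is ε-close to Markov (conditioning on (W',Y)). -/
theorem stmt12 {𝒲 : Type*} [Fintype 𝒲] [DecidableEq 𝒲] {d : ℕ} (hd : 1 ≤ d)
    -- classical registers (W_A, W'), quantum register Y'
    (P : 𝒲 × 𝒲 → ℝ) (hP : IsPMF P)
    (ρ : 𝒲 × 𝒲 → Matrix (Fin d) (Fin d) ℂ) (hρ : ∀ t, IsDensity (ρ t))
    (ε : ℝ) (hε : 0 ≤ ε)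
    (p : ℝ) (hp : p = ∑ t : 𝒲 × 𝒲, if t.1 = t.2 then 0 else P t) (hp0 : 0 < p)
    -- the pmf conditioned on the event {W_A ≠ W'}
    (Pne : 𝒲 × 𝒲 → ℝ)
    (hPne : ∀ wa w', Pne (wa, w') = if wa = w' then 0 else P (wa, w') / p)
    -- its conditional averages given W'
    (σne : 𝒲 → Matrix (Fin d) (Fin d) ℂ)
    (hσne : ∀ w', σne w' =
      if 0 < ∑ wa, Pne (wa, w')
      then ((∑ wa, Pne (wa, w') : ℝ) : ℂ)⁻¹ • ∑ wa, (Pne (wa, w') : ℂ) • ρ (wa, w')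
      else 0)
    -- hypothesis: δ(ρ_{W_A W' Y' | W_A ≠ W'}, ρ_{W_A↔W'↔Y' | W_A ≠ W'}) ≤ ε
    (h : traceDist (cqState Pne ρ) (cqState Pne (fun t => σne t.2)) ≤ ε)
    -- the extended cq-state over (W_A, W', Y) with Y = [W_A = W']
    (P' : 𝒲 × 𝒲 × Bool → ℝ)
    (hP' : ∀ wa w' y, P' (wa, w', y) = if y = decide (wa = w') then P (wa, w') else 0)
    -- its conditional averages given (W', Y)
    (σ' : 𝒲 × Bool → Matrix (Fin d) (Fin d) ℂ)
    (hσ' : ∀ w' y, σ' (w', y) =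
      if 0 < ∑ wa, P' (wa, w', y)
      then ((∑ wa, P' (wa, w', y) : ℝ) : ℂ)⁻¹ • ∑ wa, (P' (wa, w', y) : ℂ) • ρ (wa, w')
      else 0) :
    -- conclusion: δ(ρ_{W_A W' Y Y'}, ρ_{W_A↔(W',Y)↔Y'}) ≤ ε
    traceDist (cqState P' (fun t => ρ (t.1, t.2.1)))
        (cqState P' (fun t => σ' t.2)) ≤ ε :=
  stmt12_general P hP ρ hρ ε p hp hp0 Pne hPne σne hσne h P' hP' σ' hσ'
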